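/- arXiv:2004.07270 — 2 statements merged into one kernel-verified Lean document; each statement's English description precedes it below -/
import Mathlib

section
/- Suppose the pair (A,B) is controllable and the system is (Q,S,R)-dissipative. Then there exists a symmetric matrix P ∈ ℝ^{n×n} such that the dissipation matrix satisfies K(P) ⪯ 0 (negative semidefinite). -/
open Matrix

/-- `M ⪯ 0`: a real matrix is negative semidefinite iff `-M` is positive semidefinite. -/
def Matrix.NegSemidef {k : Type*} [Fintype k] (M : Matrix k k ℝ) : Prop :=
  (-M).PosSemidef

/-- Quadratic supply rate `s(u,y) = uᵀRu + uᵀSᵀy + yᵀSu + yᵀQy`. -/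
noncomputable def supplyRate {m p : ℕ} (R : Matrix (Fin m) (Fin m) ℝ)
    (S : Matrix (Fin p) (Fin m) ℝ) (Q : Matrix (Fin p) (Fin p) ℝ)
    (u : Fin m → ℝ) (y : Fin p → ℝ) : ℝ :=
  u ⬝ᵥ R.mulVec u + u ⬝ᵥ Sᵀ.mulVec y + y ⬝ᵥ S.mulVec u + y ⬝ᵥ Q.mulVec y

/-- The dissipation matrix `K(P)`. -/
noncomputable def dissipationMatrix {n m p : ℕ}
    (A : Matrix (Fin n) (Fin n) ℝ) (B : Matrix (Fin n) (Fin m) ℝ)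
    (C : Matrix (Fin p) (Fin n) ℝ) (D : Matrix (Fin p) (Fin m) ℝ)
    (R : Matrix (Fin m) (Fin m) ℝ) (S : Matrix (Fin p) (Fin m) ℝ)
    (Q : Matrix (Fin p) (Fin p) ℝ)
    (P : Matrix (Fin n) (Fin n) ℝ) : Matrix (Fin n ⊕ Fin m) (Fin n ⊕ Fin m) ℝ :=
  Matrix.fromBlocks
    (Aᵀ * P * A - P - Cᵀ * Q * C)
    (Aᵀ * P * B - (Cᵀ * S + Cᵀ * Q * D))
    (Aᵀ * P * B - (Cᵀ * S + Cᵀ * Q * D))ᵀ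
    (Bᵀ * P * B - (Dᵀ * Q * D + Dᵀ * S + Sᵀ * D + R))

/-- The controllability matrix `[B, AB, …, A^{n−1}B]`, with columns indexed by
`Fin n × Fin m` (column `(j, k)` is the `k`-th column of `A^j * B`). -/
noncomputable def controllabilityMatrix {n m : ℕ}
    (A : Matrix (Fin n) (Fin n) ℝ) (B : Matrix (Fin n) (Fin m) ℝ) :
    Matrix (Fin n) (Fin n × Fin m) ℝ :=
  Matrix.of fun i jk => (A ^ (jk.1 : ℕ) * B) i jk.2

/-!
For `N ≥ n` let `f_N x` be the least supply with which an input of horizon `N` steers the state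
from `0` to `x`. Controllability makes every state reachable in `N` steps, and dissipativity
bounds the supply of such an input below by `V x - V 0`. A quadratic function bounded below on
the fibres of a surjective linear map attains its minimum on them at a point depending linearly
on the fibre, so `f_N` is a quadratic form. Prepending a zero input gives `f_{N+1} ≤ f_N`, hence
`f_N` decreases to a limit, again a quadratic form `x ⬝ᵥ P *ᵥ x`. Appending an input `u` to an
optimal input gives `f_{N+1} (A x + B u) ≤ f_N x + s(u, C x + D u)`, whose limit is the
dissipation inequality for the storage `x ⬝ᵥ P *ᵥ x`, i.e. `K(P) ⪯ 0`.
-/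

open Module Function Filter Topology Finset

namespace QuadraticMap

open LinearMap

variable {E F : Type*} [AddCommGroup E] [Module ℝ E] [AddCommGroup F] [Module ℝ F]
  (Q : QuadraticForm ℝ E) {K : Submodule ℝ E}

lemma apply_add_smul (v k : E) (t : ℝ) :
    Q (v + t • k) = Q k * (t * t) + polar Q v k * t + Q v := by
  have h := polar_smul_right Q t v k
  rw [polar, QuadraticMap.map_smul] at h
  simp only [smul_eq_mul] at h
  linarith

/-- The trinomial `t ↦ Q (v + t • k)` is bounded below, so its discriminant is nonpositive. -/
lemma sq_polar_le_of_bddBelow_coset (hK : ∀ v, ∃ c, ∀ k ∈ K, c ≤ Q (v + k)) (v : E) :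
    ∃ d > 0, ∀ k ∈ K, polar Q v k ^ 2 ≤ 4 * Q k * d := by
  obtain ⟨c, hc⟩ := hK v
  have hv : c ≤ Q v := by simpa using hc 0 K.zero_mem
  refine ⟨Q v - c + 1, by linarith, fun k hk => ?_⟩
  have h := discrim_le_zero fun t => by
    have := hc (t • k) (K.smul_mem t hk)
    rw [apply_add_smul] at this
    change 0 ≤ Q k * (t * t) + polar Q v k * t + (Q v - c + 1)
    linarith
  rw [discrim] at h
  linarith

lemma nonneg_of_bddBelow_coset (hK : ∀ v, ∃ c, ∀ k ∈ K, c ≤ Q (v + k)) {k : E} (hk : k ∈ K) :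
    0 ≤ Q k := by
  obtain ⟨d, hd, h⟩ := sq_polar_le_of_bddBelow_coset Q hK 0
  have := h k hk
  rw [polar_zero_left] at this
  nlinarith

lemma polar_eq_zero_of_bddBelow_coset (hK : ∀ v, ∃ c, ∀ k ∈ K, c ≤ Q (v + k)) {k : E}
    (hk : k ∈ K) (hk0 : Q k = 0) (v : E) : polar Q v k = 0 := by
  obtain ⟨d, -, h⟩ := sq_polar_le_of_bddBelow_coset Q hK v
  have := h k hk
  rw [hk0] at this
  nlinarith [sq_nonneg (polar Q v k)]

lemma sup_orthogonalBilin_polarBilin_eq_top [FiniteDimensional ℝ E]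
    (hrad : ∀ k ∈ K, (∀ k' ∈ K, polar Q k' k = 0) → ∀ v, polar Q v k = 0) :
    K ⊔ K.orthogonalBilin (polarBilin Q) = ⊤ := by
  let φ : E →ₗ[ℝ] Dual ℝ K := (polarBilin Q).compl₂ K.subtype
  let ψ : K →ₗ[ℝ] Dual ℝ K := φ ∘ₗ K.subtype
  have hφ (v : E) (k : K) : φ v k = polar Q v k := rfl
  have hψ (a b : K) : ψ a b = polar Q a b := rfl
  have hrange : range ψ = (ker ψ).dualAnnihilator := by
    refine Submodule.eq_of_le_of_finrank_eq ?_ ?_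
    · rintro _ ⟨a, rfl⟩
      refine (Submodule.mem_dualAnnihilator _).2 fun b hb => ?_
      rw [hψ, polar_comm, ← hψ, mem_ker.1 hb, LinearMap.zero_apply]
    · have := ψ.finrank_range_add_finrank_ker
      have := Subspace.finrank_add_finrank_dualAnnihilator_eq (ker ψ)
      omega
  refine eq_top_iff.2 fun w _ => ?_
  obtain ⟨k, hk⟩ : φ w ∈ range ψ := by
    refine hrange ▸ (Submodule.mem_dualAnnihilator _).2 fun b hb => ?_
    rw [hφ]
    refine hrad b b.2 (fun k' hk' => ?_) w
    rw [polar_comm, ← hψ b ⟨k', hk'⟩, mem_ker.1 hb, LinearMap.zero_apply]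
  refine Submodule.mem_sup.2 ⟨k, k.2, w - k, fun z hz => ?_, add_sub_cancel _ _⟩
  have := LinearMap.congr_fun hk ⟨z, hz⟩
  rw [hψ, hφ] at this
  rw [polarBilin_apply_apply, polar_sub_right, polar_comm Q z k, polar_comm Q z w, this, sub_self]

theorem exists_isLeast_image_preimage [FiniteDimensional ℝ E] {L : E →ₗ[ℝ] F}
    (hL : Surjective L) (hbdd : ∀ x, BddBelow (Q '' (L ⁻¹' {x}))) :
    ∃ Q' : QuadraticForm ℝ F, ∀ x, IsLeast (Q '' (L ⁻¹' {x})) (Q' x) := by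
  have hK (v : E) : ∃ c, ∀ k ∈ ker L, c ≤ Q (v + k) := by
    obtain ⟨c, hc⟩ := hbdd (L v)
    exact ⟨c, fun k hk => hc ⟨v + k, by simp [mem_ker.1 hk], rfl⟩⟩
  -- The minimizers on a fibre are its points polar to `ker L`; they form a subspace `W`, and a
  -- linear section of `L` with values in `W` picks one in each fibre.
  set W := (ker L).orthogonalBilin (polarBilin Q)
  have hsup : ker L ⊔ W = ⊤ := sup_orthogonalBilin_polarBilin_eq_top Q fun k hk hkK =>
    polar_eq_zero_of_bddBelow_coset Q hK hk <| by simpa [polar_self] using hkK k hk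
  obtain ⟨G, hG⟩ := (L ∘ₗ W.subtype).exists_rightInverse_of_surjective <| by
    refine range_eq_top.2 fun x => ?_
    obtain ⟨w, rfl⟩ := hL x
    obtain ⟨k, hk, g, hg, rfl⟩ := Submodule.mem_sup.1 (hsup ▸ Submodule.mem_top : w ∈ ker L ⊔ W)
    exact ⟨⟨g, hg⟩, by simp [mem_ker.1 hk]⟩
  have hLG (x : F) : L (G x) = x := LinearMap.congr_fun hG x
  refine ⟨Q.comp (W.subtype ∘ₗ G), fun x => ⟨⟨_, hLG x, rfl⟩, ?_⟩⟩
  rintro _ ⟨w, rfl : L w = x, rfl⟩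
  set g : E := ↑(G (L w))
  have hk : w - g ∈ ker L := by simp [g, hLG]
  have hg : polar Q g (w - g) = 0 := polar_comm Q _ _ ▸ (G (L w)).2 (w - g) hk
  calc Q g ≤ Q g + Q (w - g) + polar Q g (w - g) := by
        linarith [nonneg_of_bddBelow_coset Q hK hk]
    _ = Q w := by rw [← QuadraticMap.map_add, add_sub_cancel]

end QuadraticMap

namespace QuadraticForm

variable {ι : Type*} [Fintype ι] [DecidableEq ι]

lemma apply_eq_dotProduct_toMatrix'_mulVec (Q : QuadraticForm ℝ (ι → ℝ)) (x : ι → ℝ) :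
    Q x = x ⬝ᵥ Q.toMatrix' *ᵥ x := by
  rw [← toLinearMap₂'_apply', toMatrix', toLinearMap₂'_toMatrix',
    QuadraticMap.associated_eq_self_apply]

theorem exists_isSymm_of_tendsto {α : Type*} {l : Filter α} [l.NeBot]
    {Q : α → QuadraticForm ℝ (ι → ℝ)} {f : (ι → ℝ) → ℝ}
    (h : ∀ x, Tendsto (fun a => Q a x) l (𝓝 (f x))) :
    ∃ P : Matrix ι ι ℝ, P.IsSymm ∧ ∀ x, f x = x ⬝ᵥ P *ᵥ x := by
  let e (i : ι) : ι → ℝ := Pi.single i 1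
  let P : Matrix ι ι ℝ := of fun i j => 2⁻¹ * (f (e i + e j) - f (e i) - f (e j))
  have hP : Tendsto (fun a => (Q a).toMatrix') l (𝓝 P) :=
    tendsto_pi_nhds.2 fun i => tendsto_pi_nhds.2 fun j => by
      simp only [toMatrix', LinearMap.toMatrix₂'_apply, QuadraticMap.associated_apply,
        Module.End.smul_def, QuadraticMap.half_moduleEnd_apply_eq_half_smul, smul_eq_mul,
        invOf_eq_inv]
      exact (((h _).sub (h _)).sub (h _)).const_mul _
  refine ⟨P, ?_, fun x => tendsto_nhds_unique (h x) ?_⟩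
  · ext i j
    simp only [P, transpose_apply, of_apply, add_comm (e j)]
    ring
  · have hc : Continuous fun M : Matrix ι ι ℝ => x ⬝ᵥ M *ᵥ x := by fun_prop
    refine ((hc.tendsto P).comp hP).congr fun a => ?_
    exact (apply_eq_dotProduct_toMatrix'_mulVec (Q a) x).symm

end QuadraticForm

section System

variable {n m p : ℕ} (A : Matrix (Fin n) (Fin n) ℝ) (B : Matrix (Fin n) (Fin m) ℝ)
  (C : Matrix (Fin p) (Fin n) ℝ) (D : Matrix (Fin p) (Fin m) ℝ)
  (R : Matrix (Fin m) (Fin m) ℝ) (S : Matrix (Fin p) (Fin m) ℝ) (Q : Matrix (Fin p) (Fin p) ℝ)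

noncomputable def stateMap : ℕ → (ℕ → Fin m → ℝ) →ₗ[ℝ] Fin n → ℝ
  | 0 => 0
  | k + 1 => A.mulVecLin ∘ₗ stateMap k + B.mulVecLin ∘ₗ LinearMap.proj k

@[simp] lemma stateMap_zero_apply (u : ℕ → Fin m → ℝ) : stateMap A B 0 u = 0 := rfl

lemma stateMap_succ_apply (k : ℕ) (u : ℕ → Fin m → ℝ) :
    stateMap A B (k + 1) u = A *ᵥ stateMap A B k u + B *ᵥ u k := rfl

lemma stateMap_congr {k : ℕ} {u v : ℕ → Fin m → ℝ} (h : ∀ i < k, u i = v i) :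
    stateMap A B k u = stateMap A B k v := by
  induction k with
  | zero => rfl
  | succ k ih =>
    rw [stateMap_succ_apply, stateMap_succ_apply, ih fun i hi => h i (by omega), h k k.lt_succ_self]

lemma stateMap_single (t j : ℕ) (v : Fin m → ℝ) :
    stateMap A B (t + 1 + j) (Pi.single t v) = (A ^ j * B) *ᵥ v := by
  induction j with
  | zero =>
    have : stateMap A B t (Pi.single t v) = 0 := by
      rw [stateMap_congr A B (v := 0) fun i hi => Pi.single_eq_of_ne hi.ne _, map_zero]
    simp [stateMap_succ_apply, this]
  | succ j ih =>
    rw [← add_assoc, stateMap_succ_apply, ih, Pi.single_eq_of_ne (by omega), Matrix.mulVec_zero,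
      add_zero, Matrix.mulVec_mulVec, ← Matrix.mul_assoc, ← pow_succ']

lemma stateMap_succ_of_shift {u u' : ℕ → Fin m → ℝ} (h0 : u' 0 = 0) (hs : ∀ i, u' (i + 1) = u i)
    (k : ℕ) : stateMap A B (k + 1) u' = stateMap A B k u := by
  induction k with
  | zero => simp [stateMap_succ_apply, h0]
  | succ k ih => rw [stateMap_succ_apply, ih, hs, stateMap_succ_apply]

noncomputable def extendInput (N : ℕ) : (Fin N → Fin m → ℝ) →ₗ[ℝ] ℕ → Fin m → ℝ where
  toFun w k := if h : k < N then w ⟨k, h⟩ else 0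
  map_add' w w' := by ext k : 1; by_cases h : k < N <;> simp [h]
  map_smul' c w := by ext k : 1; by_cases h : k < N <;> simp [h]

lemma extendInput_apply_of_lt {N k : ℕ} (w : Fin N → Fin m → ℝ) (h : k < N) :
    extendInput N w k = w ⟨k, h⟩ := dif_pos h

lemma extendInput_apply_of_le {N k : ℕ} (w : Fin N → Fin m → ℝ) (h : N ≤ k) :
    extendInput N w k = 0 := dif_neg h.not_gt

noncomputable def finalState (N : ℕ) : (Fin N → Fin m → ℝ) →ₗ[ℝ] Fin n → ℝ :=
  stateMap A B N ∘ₗ extendInput N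

lemma extendInput_single {N t : ℕ} (ht : t < N) (v : Fin m → ℝ) :
    extendInput N (Pi.single ⟨t, ht⟩ v) = Pi.single t v := by
  ext k : 1
  by_cases hk : k < N
  · rw [extendInput_apply_of_lt _ hk]
    by_cases hkt : k = t
    · subst hkt; simp
    · rw [Pi.single_eq_of_ne (by simpa [Fin.ext_iff] using hkt), Pi.single_eq_of_ne hkt]
  · rw [Pi.single_eq_of_ne (by omega), extendInput_apply_of_le _ (by omega)]

/-- The column `A ^ j * B * eₗ` of the controllability matrix is the final state of the impulse
`eₗ` at time `N - 1 - j`. -/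
lemma finalState_surjective (hctrb : (controllabilityMatrix A B).rank = n) {N : ℕ} (hN : n ≤ N) :
    Surjective (finalState A B N) := by
  have htop : LinearMap.range (controllabilityMatrix A B).mulVecLin = ⊤ :=
    Submodule.eq_top_of_finrank_eq (by rw [← Matrix.rank, hctrb, Module.finrank_fin_fun])
  rw [← LinearMap.range_eq_top, eq_top_iff, ← htop, Matrix.range_mulVecLin, Submodule.span_le]
  rintro _ ⟨⟨j, l⟩, rfl⟩
  obtain ⟨t, rfl⟩ : ∃ t, N = t + 1 + j := ⟨N - 1 - j, by omega⟩
  refine ⟨Pi.single ⟨t, by omega⟩ (Pi.single l 1), ?_⟩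
  rw [finalState, LinearMap.comp_apply, extendInput_single, stateMap_single,
    Matrix.mulVec_single_one]
  rfl

noncomputable def supplyForm : QuadraticForm ℝ ((Fin m → ℝ) × (Fin p → ℝ)) :=
  let u := LinearMap.fst ℝ (Fin m → ℝ) (Fin p → ℝ)
  let y := LinearMap.snd ℝ (Fin m → ℝ) (Fin p → ℝ)
  LinearMap.BilinMap.toQuadraticMap <|
    (toLinearMap₂' ℝ R).compl₁₂ u u + (toLinearMap₂' ℝ Sᵀ).compl₁₂ u y +
      (toLinearMap₂' ℝ S).compl₁₂ y u + (toLinearMap₂' ℝ Q).compl₁₂ y y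

lemma supplyForm_apply (u : Fin m → ℝ) (y : Fin p → ℝ) :
    supplyForm R S Q (u, y) = supplyRate R S Q u y := by
  simp [supplyForm, supplyRate, toLinearMap₂'_apply']

noncomputable def supplySum (N : ℕ) (u : ℕ → Fin m → ℝ) : ℝ :=
  ∑ k ∈ range N, supplyRate R S Q (u k) (C *ᵥ stateMap A B k u + D *ᵥ u k)

noncomputable def costForm (N : ℕ) : QuadraticForm ℝ (Fin N → Fin m → ℝ) :=
  ∑ k ∈ range N, (supplyForm R S Q).comp
    ((LinearMap.proj k).prod (C.mulVecLin ∘ₗ stateMap A B k + D.mulVecLin ∘ₗ LinearMap.proj k) ∘ₗ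
      extendInput N)

lemma costForm_apply (N : ℕ) (w : Fin N → Fin m → ℝ) :
    costForm A B C D R S Q N w = supplySum A B C D R S Q N (extendInput N w) := by
  simp [costForm, supplySum, supplyForm_apply]

lemma supplySum_succ (N : ℕ) (u : ℕ → Fin m → ℝ) :
    supplySum A B C D R S Q (N + 1) u = supplySum A B C D R S Q N u +
      supplyRate R S Q (u N) (C *ᵥ stateMap A B N u + D *ᵥ u N) :=
  sum_range_succ _ _

lemma supplySum_congr {N : ℕ} {u v : ℕ → Fin m → ℝ} (h : ∀ i < N, u i = v i) :
    supplySum A B C D R S Q N u = supplySum A B C D R S Q N v :=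
  sum_congr rfl fun i hi => by
    have hi := mem_range.1 hi
    rw [h i hi, stateMap_congr A B fun j hj => h j (hj.trans hi)]

lemma supplySum_succ_of_shift {u u' : ℕ → Fin m → ℝ} (h0 : u' 0 = 0)
    (hs : ∀ i, u' (i + 1) = u i) (N : ℕ) :
    supplySum A B C D R S Q (N + 1) u' = supplySum A B C D R S Q N u := by
  simp [supplySum, sum_range_succ', stateMap_succ_of_shift A B h0 hs, hs, h0, supplyRate]

def IsStorageFunction (V : (Fin n → ℝ) → ℝ) : Prop :=
  ∀ (u : ℕ → Fin m → ℝ) (x : ℕ → Fin n → ℝ),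
    (∀ k, x (k + 1) = A *ᵥ x k + B *ᵥ u k) → ∀ k₂ k₁, k₂ < k₁ →
      V (x k₁) - V (x k₂) ≤ ∑ i ∈ Ico k₂ k₁, supplyRate R S Q (u i) (C *ᵥ x i + D *ᵥ u i)

variable {A B C D R S Q}

lemma IsStorageFunction.sub_le_supplySum {V : (Fin n → ℝ) → ℝ}
    (hV : IsStorageFunction A B C D R S Q V) (N : ℕ) (u : ℕ → Fin m → ℝ) :
    V (stateMap A B N u) - V 0 ≤ supplySum A B C D R S Q N u := by
  rcases N.eq_zero_or_pos with rfl | hN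
  · simp [supplySum]
  · rw [supplySum, range_eq_Ico]
    exact hV u (fun k => stateMap A B k u) (fun k => rfl) 0 N hN

variable (A B C D R S Q) in
/-- `f x` is the least supply with which an input of horizon `N` steers the state from `0`
to `x`. -/
def IsRequiredSupply (N : ℕ) (f : (Fin n → ℝ) → ℝ) : Prop :=
  ∀ x, IsLeast (costForm A B C D R S Q N '' (finalState A B N ⁻¹' {x})) (f x)

theorem exists_isRequiredSupply (hctrb : (controllabilityMatrix A B).rank = n)
    {V : (Fin n → ℝ) → ℝ} (hV : IsStorageFunction A B C D R S Q V) {N : ℕ} (hN : n ≤ N) :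
    ∃ f : QuadraticForm ℝ (Fin n → ℝ), IsRequiredSupply A B C D R S Q N f := by
  refine QuadraticMap.exists_isLeast_image_preimage _ (finalState_surjective A B hctrb hN)
    fun x => ⟨V x - V 0, ?_⟩
  rintro _ ⟨w, rfl : finalState A B N w = x, rfl⟩
  rw [costForm_apply]
  exact hV.sub_le_supplySum _ _

namespace IsRequiredSupply

variable {N : ℕ} {f g : (Fin n → ℝ) → ℝ}

lemma sub_le {V : (Fin n → ℝ) → ℝ} (hV : IsStorageFunction A B C D R S Q V)
    (hf : IsRequiredSupply A B C D R S Q N f) (x : Fin n → ℝ) : V x - V 0 ≤ f x := by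
  obtain ⟨w, rfl : finalState A B N w = x, hw⟩ := (hf x).1
  rw [← hw, costForm_apply]
  exact hV.sub_le_supplySum _ _

lemma succ_le (hf : IsRequiredSupply A B C D R S Q N f)
    (hg : IsRequiredSupply A B C D R S Q (N + 1) g) (x : Fin n → ℝ) : g x ≤ f x := by
  obtain ⟨w, rfl : finalState A B N w = x, hw⟩ := (hf x).1
  have h0 : extendInput (N + 1) (Fin.cons 0 w : Fin (N + 1) → Fin m → ℝ) 0 = 0 :=
    extendInput_apply_of_lt _ N.succ_pos
  have hs (i : ℕ) : extendInput (N + 1) (Fin.cons 0 w : Fin (N + 1) → Fin m → ℝ) (i + 1) =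
      extendInput N w i := by
    by_cases hi : i < N
    · rw [extendInput_apply_of_lt _ (by omega), extendInput_apply_of_lt _ hi]
      exact Fin.cons_succ _ _ ⟨i, hi⟩
    · rw [extendInput_apply_of_le _ (by omega), extendInput_apply_of_le _ (by omega)]
  refine hw ▸ (hg _).2 ⟨Fin.cons 0 w, ?_, ?_⟩
  · exact stateMap_succ_of_shift A B h0 hs N
  · rw [costForm_apply, costForm_apply, supplySum_succ_of_shift A B C D R S Q h0 hs]

lemma le_add_supplyRate (hf : IsRequiredSupply A B C D R S Q N f)
    (hg : IsRequiredSupply A B C D R S Q (N + 1) g) (x : Fin n → ℝ) (v : Fin m → ℝ) :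
    g (A *ᵥ x + B *ᵥ v) ≤ f x + supplyRate R S Q v (C *ᵥ x + D *ᵥ v) := by
  obtain ⟨w, rfl : finalState A B N w = x, hw⟩ := (hf x).1
  let u' := extendInput (N + 1) (Fin.snoc w v : Fin (N + 1) → Fin m → ℝ)
  have hlt (i : ℕ) (hi : i < N) : u' i = extendInput N w i := by
    simp only [u']
    rw [extendInput_apply_of_lt _ (by omega), extendInput_apply_of_lt _ hi]
    exact Fin.snoc_castSucc (α := fun _ => Fin m → ℝ) _ _ ⟨i, hi⟩
  have hN : u' N = v := (extendInput_apply_of_lt _ N.lt_succ_self).trans (Fin.snoc_last _ _)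
  have hx : stateMap A B N u' = finalState A B N w := stateMap_congr A B hlt
  refine hw ▸ (hg _).2 ⟨Fin.snoc w v, ?_, ?_⟩
  · show stateMap A B (N + 1) u' = _
    rw [stateMap_succ_apply, hx, hN]
  · rw [costForm_apply, costForm_apply, supplySum_succ, supplySum_congr A B C D R S Q hlt]
    simp only [u'] at hx hN
    rw [hx, hN]

end IsRequiredSupply

end System

section LMI

variable {n m p : ℕ} {A : Matrix (Fin n) (Fin n) ℝ} {B : Matrix (Fin n) (Fin m) ℝ}
  {C : Matrix (Fin p) (Fin n) ℝ} {D : Matrix (Fin p) (Fin m) ℝ}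
  {R : Matrix (Fin m) (Fin m) ℝ} {S : Matrix (Fin p) (Fin m) ℝ} {Q : Matrix (Fin p) (Fin p) ℝ}
  {P : Matrix (Fin n) (Fin n) ℝ}

lemma dotProduct_dissipationMatrix_mulVec (hP : P.IsSymm) (hQ : Q.IsSymm) (x : Fin n → ℝ)
    (u : Fin m → ℝ) :
    Sum.elim x u ⬝ᵥ dissipationMatrix A B C D R S Q P *ᵥ Sum.elim x u =
      (A *ᵥ x + B *ᵥ u) ⬝ᵥ P *ᵥ (A *ᵥ x + B *ᵥ u) - x ⬝ᵥ P *ᵥ x -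
        supplyRate R S Q u (C *ᵥ x + D *ᵥ u) := by
  have htr : (Aᵀ * P * B - (Cᵀ * S + Cᵀ * Q * D))ᵀ = Bᵀ * P * A - (Sᵀ * C + Dᵀ * Q * C) := by
    simp [transpose_sub, transpose_add, transpose_mul, hP.eq, hQ.eq, Matrix.mul_assoc]
  rw [dissipationMatrix, htr, fromBlocks_mulVec, Sum.elim_comp_inl, Sum.elim_comp_inr,
    sumElim_dotProduct_sumElim]
  simp only [sub_mulVec, add_mulVec, dotProduct_sub, dotProduct_add, ← mulVec_mulVec, supplyRate,
    mulVec_add, add_dotProduct, dotProduct_transpose_mulVec]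
  simp only [dotProduct_comm (P *ᵥ _), dotProduct_comm (Q *ᵥ _), dotProduct_comm (S *ᵥ _)]
  ring

lemma negSemidef_dissipationMatrix (hP : P.IsSymm) (hQ : Q.IsSymm) (hR : R.IsSymm)
    (h : ∀ x u, (A *ᵥ x + B *ᵥ u) ⬝ᵥ P *ᵥ (A *ᵥ x + B *ᵥ u) ≤
      x ⬝ᵥ P *ᵥ x + supplyRate R S Q u (C *ᵥ x + D *ᵥ u)) :
    (dissipationMatrix A B C D R S Q P).NegSemidef := by
  refine PosSemidef.of_dotProduct_mulVec_nonneg ?_ fun z => ?_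
  · rw [IsHermitian, conjTranspose_eq_transpose_of_trivial, transpose_neg, neg_inj,
      dissipationMatrix, fromBlocks_transpose]
    simp only [transpose_sub, transpose_add, transpose_mul, transpose_transpose, hP.eq, hQ.eq,
      hR.eq, Matrix.mul_assoc]
    congr 1
    abel
  · rw [star_trivial, neg_mulVec, dotProduct_neg, ← Sum.elim_comp_inl_inr z,
      dotProduct_dissipationMatrix_mulVec hP hQ]
    linarith [h (z ∘ Sum.inl) (z ∘ Sum.inr)]

end LMI

theorem dissipative_controllable_implies_lmi {n m p : ℕ}
    (A : Matrix (Fin n) (Fin n) ℝ) (B : Matrix (Fin n) (Fin m) ℝ)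
    (C : Matrix (Fin p) (Fin n) ℝ) (D : Matrix (Fin p) (Fin m) ℝ)
    (R : Matrix (Fin m) (Fin m) ℝ) (S : Matrix (Fin p) (Fin m) ℝ)
    (Q : Matrix (Fin p) (Fin p) ℝ) (hR : R.IsSymm) (hQ : Q.IsSymm)
    (hctrb : (controllabilityMatrix A B).rank = n)
    (hdiss : ∃ V : (Fin n → ℝ) → ℝ,
      ∀ (u : ℕ → Fin m → ℝ) (x : ℕ → Fin n → ℝ),
        (∀ k : ℕ, x (k + 1) = A.mulVec (x k) + B.mulVec (u k)) →
        ∀ k₂ k₁ : ℕ, k₂ < k₁ →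
          V (x k₁) - V (x k₂)
            ≤ ∑ i ∈ Finset.Ico k₂ k₁,
                supplyRate R S Q (u i) (C.mulVec (x i) + D.mulVec (u i))) :
    ∃ P : Matrix (Fin n) (Fin n) ℝ, P.IsSymm ∧
      (dissipationMatrix A B C D R S Q P).NegSemidef := by
  obtain ⟨V, hV⟩ := hdiss
  choose v hv using fun t : ℕ => exists_isRequiredSupply hctrb hV (N := n + t) le_self_add
  have hlim (x : Fin n → ℝ) : Tendsto (fun t => v t x) atTop (𝓝 (⨅ t, v t x)) :=
    tendsto_atTop_ciInf (antitone_nat_of_succ_le fun t => (hv t).succ_le (hv (t + 1)) x)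
      ⟨V x - V 0, Set.forall_mem_range.2 fun t => (hv t).sub_le hV x⟩
  obtain ⟨P, hPsymm, hP⟩ := QuadraticForm.exists_isSymm_of_tendsto hlim
  refine ⟨P, hPsymm, negSemidef_dissipationMatrix hPsymm hQ hR fun x u => ?_⟩
  rw [← hP, ← hP]
  exact le_of_tendsto_of_tendsto' ((hlim _).comp (tendsto_add_atTop_nat 1)) ((hlim x).add_const _)
    fun t => (hv t).le_add_supplyRate (hv (t + 1)) x u
end

section
/- Suppose the data matrices satisfy the noise-free consistency relation X₊ = AX + BU, the stacked matrix [X; U] ∈ ℝ^{(n+m)×N} has full row rank n+m, and there exists a symmetric P ∈ ℝ^{n×n} with M(P) ⪯ 0 (negative semidefinite). Then the system (A,B,C,D) is (Q,S,R)-dissipative, with quadratic storage function V(x) = xᵀPx. -/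
open Matrix

/-- The data-dependent matrix `M(P)`. -/
noncomputable def dataMatrixM {n m p N : ℕ}
    (C : Matrix (Fin p) (Fin n) ℝ) (D : Matrix (Fin p) (Fin m) ℝ)
    (R : Matrix (Fin m) (Fin m) ℝ) (S : Matrix (Fin p) (Fin m) ℝ)
    (Q : Matrix (Fin p) (Fin p) ℝ)
    (X Xp : Matrix (Fin n) (Fin N) ℝ) (U : Matrix (Fin m) (Fin N) ℝ)
    (P : Matrix (Fin n) (Fin n) ℝ) : Matrix (Fin N) (Fin N) ℝ :=
  Xpᵀ * P * Xp - Xᵀ * P * X -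
    (Uᵀ * R * U + Uᵀ * Sᵀ * (C * X + D * U) + (C * X + D * U)ᵀ * S * U
      + (C * X + D * U)ᵀ * Q * (C * X + D * U))

/-! Full row rank of `[X; U]` writes every pair `(x, u)` as `(X v, U v)`; then `Xp v = A x + B u`,
so the quadratic form of `M(P)` at `v` is exactly `V(A x + B u) - V(x) - s(u, C x + D u)`.
Hence `M(P) ⪯ 0` yields the one-step dissipation inequality at every state and input, and it
telescopes along any trajectory. -/

theorem Matrix.mulVec_surjective_of_rank_eq_card {K : Type*} [Field K] {ι κ : Type*}
    [Fintype ι] [Fintype κ] {M : Matrix ι κ K} (h : M.rank = Fintype.card ι) :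
    Function.Surjective M.mulVec := by
  have hrange : LinearMap.range M.mulVecLin = ⊤ :=
    Submodule.eq_top_of_finrank_eq (by rw [← Matrix.rank, h, Module.finrank_fintype_fun_eq_card])
  exact LinearMap.range_eq_top.mp hrange

theorem Matrix.NegSemidef.dotProduct_mulVec_nonpos {k : Type*} [Fintype k]
    {M : Matrix k k ℝ} (hM : M.NegSemidef) (v : k → ℝ) : v ⬝ᵥ M *ᵥ v ≤ 0 := by
  have := hM.dotProduct_mulVec_nonneg v
  simp only [neg_mulVec, dotProduct_neg, star_trivial] at this
  linarith

theorem Finset.sub_le_sum_Ico_of_sub_le {α : Type*} [AddCommGroup α] [PartialOrder α]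
    [IsOrderedAddMonoid α] {f g : ℕ → α} (h : ∀ k, f (k + 1) - f k ≤ g k)
    {k₂ k₁ : ℕ} (hk : k₂ ≤ k₁) : f k₁ - f k₂ ≤ ∑ i ∈ Finset.Ico k₂ k₁, g i :=
  Finset.sum_Ico_sub f hk ▸ Finset.sum_le_sum fun i _ => h i

theorem dotProduct_mulVec_dataMatrixM {n m p N : ℕ}
    (C : Matrix (Fin p) (Fin n) ℝ) (D : Matrix (Fin p) (Fin m) ℝ)
    (R : Matrix (Fin m) (Fin m) ℝ) (S : Matrix (Fin p) (Fin m) ℝ)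
    (Q : Matrix (Fin p) (Fin p) ℝ)
    (X Xp : Matrix (Fin n) (Fin N) ℝ) (U : Matrix (Fin m) (Fin N) ℝ)
    (P : Matrix (Fin n) (Fin n) ℝ) (v : Fin N → ℝ) :
    v ⬝ᵥ dataMatrixM C D R S Q X Xp U P *ᵥ v =
      (Xp *ᵥ v) ⬝ᵥ P *ᵥ (Xp *ᵥ v) - (X *ᵥ v) ⬝ᵥ P *ᵥ (X *ᵥ v) -
        supplyRate R S Q (U *ᵥ v) (C *ᵥ (X *ᵥ v) + D *ᵥ (U *ᵥ v)) := by
  simp only [dataMatrixM, supplyRate, sub_mulVec, add_mulVec, dotProduct_sub, dotProduct_add,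
    ← mulVec_mulVec, dotProduct_mulVec, vecMul_transpose, transpose_add, transpose_mul,
    mulVec_add, add_dotProduct, add_vecMul]

theorem quadratic_storage_step_le_supplyRate {n m p N : ℕ}
    {A : Matrix (Fin n) (Fin n) ℝ} {B : Matrix (Fin n) (Fin m) ℝ}
    {C : Matrix (Fin p) (Fin n) ℝ} {D : Matrix (Fin p) (Fin m) ℝ}
    {R : Matrix (Fin m) (Fin m) ℝ} {S : Matrix (Fin p) (Fin m) ℝ}
    {Q : Matrix (Fin p) (Fin p) ℝ} {X : Matrix (Fin n) (Fin N) ℝ} {U : Matrix (Fin m) (Fin N) ℝ}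
    {P : Matrix (Fin n) (Fin n) ℝ}
    (hsurj : Function.Surjective (fromRows X U).mulVec)
    (hM : (dataMatrixM C D R S Q X (A * X + B * U) U P).NegSemidef)
    (x : Fin n → ℝ) (u : Fin m → ℝ) :
    (A *ᵥ x + B *ᵥ u) ⬝ᵥ P *ᵥ (A *ᵥ x + B *ᵥ u) - x ⬝ᵥ P *ᵥ x
      ≤ supplyRate R S Q u (C *ᵥ x + D *ᵥ u) := by
  obtain ⟨v, hv⟩ := hsurj (Sum.elim x u)
  obtain ⟨hX, hU⟩ := Sum.elim_eq_iff.mp (fromRows_mulVec X U v ▸ hv)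
  have hquad := dotProduct_mulVec_dataMatrixM C D R S Q X (A * X + B * U) U P v
  rw [add_mulVec, ← mulVec_mulVec, ← mulVec_mulVec, hX, hU] at hquad
  linarith [hM.dotProduct_mulVec_nonpos v]

theorem dataMatrix_lmi_and_full_rank_implies_dissipative_general {n m p N : ℕ}
    (A : Matrix (Fin n) (Fin n) ℝ) (B : Matrix (Fin n) (Fin m) ℝ)
    (C : Matrix (Fin p) (Fin n) ℝ) (D : Matrix (Fin p) (Fin m) ℝ)
    (R : Matrix (Fin m) (Fin m) ℝ) (S : Matrix (Fin p) (Fin m) ℝ)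
    (Q : Matrix (Fin p) (Fin p) ℝ)
    (X Xp : Matrix (Fin n) (Fin N) ℝ) (U : Matrix (Fin m) (Fin N) ℝ)
    (hdata : Xp = A * X + B * U)
    (hrank : (Matrix.fromRows X U).rank = n + m)
    (P : Matrix (Fin n) (Fin n) ℝ)
    (hM : (dataMatrixM C D R S Q X Xp U P).NegSemidef) :
    ∀ (u : ℕ → Fin m → ℝ) (x : ℕ → Fin n → ℝ),
      (∀ k : ℕ, x (k + 1) = A.mulVec (x k) + B.mulVec (u k)) →
      ∀ k₂ k₁ : ℕ, k₂ < k₁ →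
        (x k₁) ⬝ᵥ P.mulVec (x k₁) - (x k₂) ⬝ᵥ P.mulVec (x k₂)
          ≤ ∑ i ∈ Finset.Ico k₂ k₁,
              supplyRate R S Q (u i) (C.mulVec (x i) + D.mulVec (u i)) := by
  intro u x hx k₂ k₁ hk
  subst hdata
  have hsurj : Function.Surjective (fromRows X U).mulVec :=
    mulVec_surjective_of_rank_eq_card (by simpa using hrank)
  refine Finset.sub_le_sum_Ico_of_sub_le (f := fun k => x k ⬝ᵥ P *ᵥ x k) (fun k => ?_) hk.le
  simpa only [hx k] using quadratic_storage_step_le_supplyRate hsurj hM (x k) (u k)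

theorem dataMatrix_lmi_and_full_rank_implies_dissipative {n m p N : ℕ}
    (A : Matrix (Fin n) (Fin n) ℝ) (B : Matrix (Fin n) (Fin m) ℝ)
    (C : Matrix (Fin p) (Fin n) ℝ) (D : Matrix (Fin p) (Fin m) ℝ)
    (R : Matrix (Fin m) (Fin m) ℝ) (S : Matrix (Fin p) (Fin m) ℝ)
    (Q : Matrix (Fin p) (Fin p) ℝ) (hR : R.IsSymm) (hQ : Q.IsSymm)
    (X Xp : Matrix (Fin n) (Fin N) ℝ) (U : Matrix (Fin m) (Fin N) ℝ)
    (hdata : Xp = A * X + B * U)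
    (hrank : (Matrix.fromRows X U).rank = n + m)
    (P : Matrix (Fin n) (Fin n) ℝ) (hP : P.IsSymm)
    (hM : (dataMatrixM C D R S Q X Xp U P).NegSemidef) :
    ∀ (u : ℕ → Fin m → ℝ) (x : ℕ → Fin n → ℝ),
      (∀ k : ℕ, x (k + 1) = A.mulVec (x k) + B.mulVec (u k)) →
      ∀ k₂ k₁ : ℕ, k₂ < k₁ →
        (x k₁) ⬝ᵥ P.mulVec (x k₁) - (x k₂) ⬝ᵥ P.mulVec (x k₂)
          ≤ ∑ i ∈ Finset.Ico k₂ k₁,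
              supplyRate R S Q (u i) (C.mulVec (x i) + D.mulVec (u i)) :=
  dataMatrix_lmi_and_full_rank_implies_dissipative_general A B C D R S Q X Xp U hdata hrank P hM
end
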